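/- Let $S = \{n_1, \dots, n_A\} \subset \mathbb{Z}$ be a finite set of distinct integers and let $M \in \mathbb{N}$. Then there exist integers $m_1, m_1', \dots, m_A, m_A'$, all $\ge M$, with $2m_j - m_j' = n_j$ for each $j$, such that: (1) whenever $k, l, m \in S^\dagger := \{m_1, m_1', \dots, m_A, m_A'\}$ with $l \notin \{k, m\}$, either $|k - l + m| \ge M$ or $(k, l, m) = (m_j, m_j', m_j)$ for some $j$; (2) whenever $k, l \in S^\dagger$ and $n \in S$, $|k - n + l| \ge M$, and moreover $|k - l + n| \ge M$ whenever $k \ne l$; (3) whenever $k \in S^\dagger$ and $m, n \in S$, $|k - m + n| \ge M$ and $|m + k - n| \ge M$. -/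
import Mathlib

private lemma five_le_pow (z : ℕ) : (5:ℤ) ≤ 5 ^ (z+1) := by
  calc (5:ℤ) = 5 ^ 1 := by ring
  _ ≤ 5 ^ (z+1) := pow_le_pow_right₀ (by norm_num) (by omega)

private lemma pow5_pos (x : ℕ) : (0:ℤ) < 5 ^ x := by positivity

private lemma key5 : ∀ s x y z : ℕ, x + y + z = s → ∀ a b c : ℤ,
    (a = 1 ∨ a = 2) → (b = 1 ∨ b = 2) → (c = 1 ∨ c = 2) →
    a * 5 ^ x + c * 5 ^ z = b * 5 ^ y →
    a = 1 ∧ b = 2 ∧ c = 1 ∧ x = y ∧ z = y := by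
  intro s
  induction s using Nat.strong_induction_on with
  | _ s ih =>
    intro x y z hs a b c ha hb hc h
    match x, y, z with
    | 0, 0, 0 =>
      simp only [pow_zero, mul_one] at h
      rcases ha with rfl|rfl <;> rcases hb with rfl|rfl <;> rcases hc with rfl|rfl <;> omega
    | 0, 0, z+1 =>
      exfalso
      have h5 := five_le_pow z
      simp only [pow_zero, mul_one] at h
      rcases ha with rfl|rfl <;> rcases hb with rfl|rfl <;> rcases hc with rfl|rfl <;> linarith
    | 0, y+1, 0 =>
      exfalso
      have h5 := five_le_pow y
      simp only [pow_zero, mul_one] at h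
      rcases ha with rfl|rfl <;> rcases hb with rfl|rfl <;> rcases hc with rfl|rfl <;> linarith
    | 0, y+1, z+1 =>
      exfalso
      have hd : (5:ℤ) ∣ a := ⟨b * 5 ^ y - c * 5 ^ z, by
        simp only [pow_zero, one_mul] at h; linear_combination h⟩
      rcases ha with rfl|rfl <;> norm_num at hd
    | x+1, 0, 0 =>
      exfalso
      have h5 := five_le_pow x
      simp only [pow_zero, mul_one] at h
      rcases ha with rfl|rfl <;> rcases hb with rfl|rfl <;> rcases hc with rfl|rfl <;> linarith
    | x+1, 0, z+1 =>
      exfalso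
      have h5 := five_le_pow x
      have h5' := five_le_pow z
      simp only [pow_zero, mul_one] at h
      rcases ha with rfl|rfl <;> rcases hb with rfl|rfl <;> rcases hc with rfl|rfl <;> linarith
    | x+1, y+1, 0 =>
      exfalso
      have hd : (5:ℤ) ∣ c := ⟨b * 5 ^ y - a * 5 ^ x, by
        simp only [pow_zero, mul_one] at h; linear_combination h⟩
      rcases hc with rfl|rfl <;> norm_num at hd
    | x+1, y+1, z+1 =>
      have h2 : (a * 5 ^ x + c * 5 ^ z) * 5 = (b * 5 ^ y) * 5 := by linear_combination h
      have h' : a * 5 ^ x + c * 5 ^ z = b * 5 ^ y :=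
        mul_right_cancel₀ (by norm_num) h2
      obtain ⟨h1, h2', h3, h4, h5⟩ := ih (x + y + z) (by omega) x y z rfl a b c ha hb hc h'
      exact ⟨h1, h2', h3, by omega, by omega⟩

private lemma eq_pow5 (a b : ℤ) (x y : ℕ) (ha : a = 1 ∨ a = 2) (hb : b = 1 ∨ b = 2)
    (h : a * 5 ^ x = b * 5 ^ y) : a = b ∧ x = y := by
  have hodd : ∀ t : ℕ, Odd ((5:ℤ) ^ t) := fun t => Odd.pow ⟨2, by norm_num⟩
  have hp : (5:ℤ) ^ x = 5 ^ y → x = y := by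
    intro hxy
    have hxy' : (5:ℕ) ^ x = 5 ^ y := by exact_mod_cast hxy
    exact Nat.pow_right_injective (by norm_num) hxy'
  rcases ha with rfl|rfl <;> rcases hb with rfl|rfl
  · exact ⟨rfl, hp (by linarith)⟩
  · exfalso
    have h1 : Odd ((5:ℤ) ^ x) := hodd x
    rw [one_mul] at h
    rw [h] at h1
    exact (Int.not_odd_iff_even.mpr ⟨5 ^ y, by ring⟩) h1
  · exfalso
    have h1 : Odd ((5:ℤ) ^ y) := hodd y
    rw [one_mul] at h
    rw [← h] at h1
    exact (Int.not_odd_iff_even.mpr ⟨5 ^ x, by ring⟩) h1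
  · exact ⟨rfl, hp (mul_left_cancel₀ two_ne_zero h)⟩


/-- Frequency-selection lemma for the cubic nonlinearity: given distinct
target frequencies `n₁,…,n_A` and a threshold `M`, one can choose new
frequencies `mⱼ, m'ⱼ ≥ M` with `2mⱼ - m'ⱼ = nⱼ` such that the only
low-frequency triple interactions within `S† = {mⱼ, m'ⱼ}` are the designated
resonant triples `(mⱼ, m'ⱼ, mⱼ)`, and all mixed interactions with `S` are
high-frequency. -/
theorem stmt_6 (A : ℕ) (n : Fin A → ℤ) (hn : Function.Injective n) (M : ℕ) :
    ∃ m m' : Fin A → ℤ,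
      (∀ j, (M : ℤ) ≤ m j ∧ (M : ℤ) ≤ m' j ∧ 2 * m j - m' j = n j) ∧
      (∀ k l mm : ℤ, k ∈ Set.range m ∪ Set.range m' →
          l ∈ Set.range m ∪ Set.range m' → mm ∈ Set.range m ∪ Set.range m' →
          l ≠ k → l ≠ mm →
          ((M : ℤ) ≤ |k - l + mm| ∨ ∃ j, k = m j ∧ l = m' j ∧ mm = m j)) ∧
      (∀ k l : ℤ, k ∈ Set.range m ∪ Set.range m' →
          l ∈ Set.range m ∪ Set.range m' → ∀ j : Fin A,
          (M : ℤ) ≤ |k - n j + l| ∧ (k ≠ l → (M : ℤ) ≤ |k - l + n j|)) ∧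
      (∀ k : ℤ, k ∈ Set.range m ∪ Set.range m' → ∀ i j : Fin A,
          (M : ℤ) ≤ |k - n i + n j| ∧ (M : ℤ) ≤ |n i + k - n j|) := by

  classical
  set E : ℤ := ∑ j : Fin A, |n j| with hEdef
  have hEnn : 0 ≤ E := Finset.sum_nonneg fun j _ => abs_nonneg _
  have hnE : ∀ j, |n j| ≤ E := fun j =>
    Finset.single_le_sum (f := fun j => |n j|) (fun i _ => abs_nonneg _) (Finset.mem_univ j)
  have hM0 : (0:ℤ) ≤ (M:ℤ) := Int.natCast_nonneg M
  set N : ℤ := (M:ℤ) + 3 * E + 1 with hNdef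
  have hNpos : 0 < N := by positivity
  set m : Fin A → ℤ := fun j => 5 ^ ((j:ℕ)+1) * N with hm
  set m' : Fin A → ℤ := fun j => 2 * 5 ^ ((j:ℕ)+1) * N - n j with hm'
  -- estimate lemma
  have hest : ∀ c e : ℤ, c ≠ 0 → |e| ≤ 3 * E → (M:ℤ) ≤ |c * N + e| := by
    intro c e hc he
    have h1 : 1 ≤ |c| := Int.one_le_abs hc
    have h2 : N ≤ |c * N| := by
      rw [abs_mul, abs_of_pos hNpos]
      nlinarith
    have h3 : |c * N| ≤ |c * N + e| + |e| := by
      have := abs_add_le (c * N + e) (-e)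
      simpa using this
    linarith
  -- representation lemma
  have hrep : ∀ k ∈ Set.range m ∪ Set.range m', ∃ (a e : ℤ) (i : Fin A),
      (a = 1 ∨ a = 2) ∧ |e| ≤ E ∧ k = a * 5 ^ ((i:ℕ)+1) * N - e ∧
      ((a = 1 ∧ k = m i) ∨ (a = 2 ∧ k = m' i)) := by
    intro k hk
    rcases hk with ⟨i, rfl⟩ | ⟨i, rfl⟩
    · exact ⟨1, 0, i, Or.inl rfl, by simpa using hEnn, by simp [hm], Or.inl ⟨rfl, rfl⟩⟩
    · exact ⟨2, n i, i, Or.inr rfl, hnE i, by simp [hm'], Or.inr ⟨rfl, rfl⟩⟩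
  refine ⟨m, m', ?_, ?_, ?_, ?_⟩
  · intro j
    have h5 := five_le_pow (j:ℕ)
    have habs := abs_le.mp (hnE j)
    refine ⟨?_, ?_, by simp [hm, hm']; ring⟩
    · show (M:ℤ) ≤ 5 ^ ((j:ℕ)+1) * N
      nlinarith
    · show (M:ℤ) ≤ 2 * 5 ^ ((j:ℕ)+1) * N - n j
      nlinarith
  · -- condition (1)
    intro k l mm hk hl hmm _ _
    obtain ⟨a, ea, i, ha, hea, hka, hk'⟩ := hrep k hk
    obtain ⟨b, eb, i', hb, heb, hlb, hl'⟩ := hrep l hl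
    obtain ⟨c, ec, i'', hc, hmc, hmc2, hm2'⟩ := hrep mm hmm
    by_cases hz : a * 5 ^ ((i:ℕ)+1) - b * 5 ^ ((i':ℕ)+1) + c * 5 ^ ((i'':ℕ)+1) = 0
    · right
      have hkey := key5 (((i:ℕ)+1) + (((i':ℕ)+1) + ((i'':ℕ)+1))) ((i:ℕ)+1) ((i':ℕ)+1)
        ((i'':ℕ)+1) (by omega) a b c ha hb hc (by linarith)
      obtain ⟨ha1, hb2, hc1, hXY, hZY⟩ := hkey
      have hii : i = i' := Fin.ext (by omega)
      have hii' : i'' = i' := Fin.ext (by omega)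
      refine ⟨i', ?_, ?_, ?_⟩
      · rcases hk' with ⟨_, hk1⟩ | ⟨h2, _⟩
        · rw [hk1, hii]
        · exfalso; omega
      · rcases hl' with ⟨h1, _⟩ | ⟨_, hl2⟩
        · exfalso; omega
        · exact hl2
      · rcases hm2' with ⟨_, hm1⟩ | ⟨h2, _⟩
        · rw [hm1, hii']
        · exfalso; omega
    · left
      have hkey : k - l + mm =
          (a * 5 ^ ((i:ℕ)+1) - b * 5 ^ ((i':ℕ)+1) + c * 5 ^ ((i'':ℕ)+1)) * N
            + (-ea + eb - ec) := by
        rw [hka, hlb, hmc2]; ring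
      rw [hkey]
      refine hest _ _ hz ?_
      rw [abs_le] at hea heb hmc ⊢
      omega
  · -- condition (2)
    intro k l hk hl j
    obtain ⟨a, ea, i, ha, hea, hka, hk'⟩ := hrep k hk
    obtain ⟨b, eb, i', hb, heb, hlb, hl'⟩ := hrep l hl
    have hnj := abs_le.mp (hnE j)
    constructor
    · have hpos : 0 < a * 5 ^ ((i:ℕ)+1) + b * 5 ^ ((i':ℕ)+1) := by
        have h1 := pow5_pos ((i:ℕ)+1)
        have h2 := pow5_pos ((i':ℕ)+1)
        have ha1 : 1 ≤ a := by rcases ha with rfl|rfl <;> norm_num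
        have hb1 : 1 ≤ b := by rcases hb with rfl|rfl <;> norm_num
        nlinarith
      have hkey : k - n j + l =
          (a * 5 ^ ((i:ℕ)+1) + b * 5 ^ ((i':ℕ)+1)) * N + (-ea - eb - n j) := by
        rw [hka, hlb]; ring
      rw [hkey]
      refine hest _ _ (ne_of_gt hpos) ?_
      rw [abs_le] at hea heb ⊢
      omega
    · intro hkl
      have hz : a * 5 ^ ((i:ℕ)+1) - b * 5 ^ ((i':ℕ)+1) ≠ 0 := by
        intro h0
        obtain ⟨hab, hXY⟩ := eq_pow5 a b ((i:ℕ)+1) ((i':ℕ)+1) ha hb (by linarith)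
        have hii : i = i' := Fin.ext (by omega)
        apply hkl
        rcases hk' with ⟨ha1, hk1⟩ | ⟨ha2, hk2⟩ <;>
          rcases hl' with ⟨hb1, hl1⟩ | ⟨hb2, hl2⟩
        · rw [hk1, hl1, hii]
        · exfalso; omega
        · exfalso; omega
        · rw [hk2, hl2, hii]
      have hkey : k - l + n j =
          (a * 5 ^ ((i:ℕ)+1) - b * 5 ^ ((i':ℕ)+1)) * N + (-ea + eb + n j) := by
        rw [hka, hlb]; ring
      rw [hkey]
      refine hest _ _ hz ?_
      rw [abs_le] at hea heb ⊢
      omega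
  · -- condition (3)
    intro k hk i j
    obtain ⟨a, ea, i', ha, hea, hka, hk'⟩ := hrep k hk
    have hni := abs_le.mp (hnE i)
    have hnj := abs_le.mp (hnE j)
    have hz : a * 5 ^ ((i':ℕ)+1) ≠ 0 := by
      have := pow5_pos ((i':ℕ)+1)
      rcases ha with rfl|rfl <;> positivity
    constructor
    · have hkey : k - n i + n j =
          (a * 5 ^ ((i':ℕ)+1)) * N + (-ea - n i + n j) := by rw [hka]; ring
      rw [hkey]
      refine hest _ _ hz ?_
      rw [abs_le] at hea ⊢
      omega
    · have hkey : n i + k - n j =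
          (a * 5 ^ ((i':ℕ)+1)) * N + (n i - ea - n j) := by rw [hka]; ring
      rw [hkey]
      refine hest _ _ hz ?_
      rw [abs_le] at hea ⊢
      omega
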